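/- Let d > 0, α₀ ∈ ℝ, r(α) = √(d / cos(2(α−α₀))) for |α − α₀| < π/4, and U(α,β) = r(α)·(cos α cos β, sin α cos β, cos α sin β, sin α sin β) ∈ ℝ⁴. Then at every point (α,β) with |α − α₀| < π/4, the vector (1/((r'(α))² + (r(α))²)) · ∂²U/∂α²(α,β) + (1/(r(α))²) · ∂²U/∂β²(α,β) belongs to the linear span of ∂U/∂α(α,β) and ∂U/∂β(α,β). (This expresses that the mean curvature vector of the surface parameterized by U vanishes, i.e., U parameterizes a minimal surface.) -/

import Mathlib

/-!
Write `U = r(α) • e(α, β)` with `e(α, β) = unitVec α β = (cos α, sin α) ⊗ (cos β, sin β)`.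
Shifting either angle by `π / 2` differentiates `e`, and shifting by `π` negates it, so
`U_α = r e_α + r' e`, `U_αα = (r'' - r) e + 2 r' e_α` and `U_ββ = -r e`. Hence the combination
`(r'² + r²)⁻¹ U_αα + r⁻² U_ββ` is a multiple of `U_α` as soon as `r r'' = 2 r² + 3 r'²`, and
`r = √(d / cos 2(α - α₀))` solves this equation because `r' = r tan 2(α - α₀)`.
-/

open Real Filter Topology

/-- `r^{d,α₀}(α) = √(d / cos(2(α−α₀)))`. -/
noncomputable def rr (d α₀ α : ℝ) : ℝ := Real.sqrt (d / Real.cos (2 * (α - α₀)))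

/-- The surface parameterization
`U(α,β) = r(α)·(cos α cos β, sin α cos β, cos α sin β, sin α sin β)`. -/
noncomputable def U (d α₀ α β : ℝ) : EuclideanSpace ℝ (Fin 4) :=
  rr d α₀ α •
    (WithLp.toLp 2 ![Real.cos α * Real.cos β, Real.sin α * Real.cos β,
       Real.cos α * Real.sin β, Real.sin α * Real.sin β] :
      EuclideanSpace ℝ (Fin 4))

theorem HasDerivAt.toLp {𝕜 ι : Type*} [NontriviallyNormedField 𝕜] [Fintype ι] {E : ι → Type*}
    [∀ i, NormedAddCommGroup (E i)] [∀ i, NormedSpace 𝕜 (E i)] (p : ENNReal) [Fact (1 ≤ p)]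
    {g : 𝕜 → ∀ i, E i} {g' : ∀ i, E i} {x : 𝕜} (h : HasDerivAt g g' x) :
    HasDerivAt (fun t => WithLp.toLp p (g t)) (WithLp.toLp p g') x :=
  (PiLp.hasFDerivAt_toLp p (g x)).comp_hasDerivAt x h

noncomputable def unitVec (α β : ℝ) : EuclideanSpace ℝ (Fin 4) :=
  WithLp.toLp 2 ![cos α * cos β, sin α * cos β, cos α * sin β, sin α * sin β]

theorem U_eq_smul_unitVec (d α₀ α β : ℝ) : U d α₀ α β = rr d α₀ α • unitVec α β := rfl

theorem unitVec_add_pi_left (α β : ℝ) : unitVec (α + π) β = -unitVec α β := by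
  ext i; fin_cases i <;> simp [unitVec]

theorem unitVec_add_pi_right (α β : ℝ) : unitVec α (β + π) = -unitVec α β := by
  ext i; fin_cases i <;> simp [unitVec]

theorem hasDerivAt_unitVec_left (α β : ℝ) :
    HasDerivAt (fun a => unitVec a β) (unitVec (α + π / 2) β) α := by
  refine HasDerivAt.toLp 2 (hasDerivAt_pi.2 fun i => ?_)
  fin_cases i
  · simpa [cos_add_pi_div_two] using (hasDerivAt_cos α).mul_const (cos β)
  · simpa [sin_add_pi_div_two] using (hasDerivAt_sin α).mul_const (cos β)
  · simpa [cos_add_pi_div_two] using (hasDerivAt_cos α).mul_const (sin β)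
  · simpa [sin_add_pi_div_two] using (hasDerivAt_sin α).mul_const (sin β)

theorem hasDerivAt_unitVec_right (α β : ℝ) :
    HasDerivAt (fun b => unitVec α b) (unitVec α (β + π / 2)) β := by
  refine HasDerivAt.toLp 2 (hasDerivAt_pi.2 fun i => ?_)
  fin_cases i
  · simpa [cos_add_pi_div_two] using (hasDerivAt_cos β).const_mul (cos α)
  · simpa [cos_add_pi_div_two] using (hasDerivAt_cos β).const_mul (sin α)
  · simpa [sin_add_pi_div_two] using (hasDerivAt_sin β).const_mul (cos α)
  · simpa [sin_add_pi_div_two] using (hasDerivAt_sin β).const_mul (sin α)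

theorem hasDerivAt_smul_unitVec_left {r : ℝ → ℝ} {r' α : ℝ} (β : ℝ) (hr : HasDerivAt r r' α) :
    HasDerivAt (fun a => r a • unitVec a β) (r α • unitVec (α + π / 2) β + r' • unitVec α β) α :=
  hr.smul (hasDerivAt_unitVec_left α β)

theorem deriv_deriv_smul_unitVec_left {r r' : ℝ → ℝ} {α r'' : ℝ} (β : ℝ)
    (hr : ∀ᶠ a in 𝓝 α, HasDerivAt r (r' a) a) (hr' : HasDerivAt r' r'' α) :
    deriv (deriv fun a => r a • unitVec a β) α =
      (r'' - r α) • unitVec α β + (2 * r' α) • unitVec (α + π / 2) β := by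
  have hderiv : deriv (fun a => r a • unitVec a β) =ᶠ[𝓝 α]
      fun a => r a • unitVec (a + π / 2) β + r' a • unitVec a β :=
    hr.mono fun a ha => (hasDerivAt_smul_unitVec_left β ha).deriv
  have hshift : HasDerivAt (fun a => unitVec (a + π / 2) β) (-unitVec α β) α := by
    simpa [add_assoc, unitVec_add_pi_left] using
      (hasDerivAt_unitVec_left (α + π / 2) β).comp_add_const α (π / 2)
  rw [hderiv.deriv_eq]
  refine ((hr.self_of_nhds.smul hshift).add (hasDerivAt_smul_unitVec_left β hr')).deriv.trans ?_
  module

theorem deriv_smul_unitVec_right (c α β : ℝ) :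
    deriv (fun b => c • unitVec α b) β = c • unitVec α (β + π / 2) :=
  ((hasDerivAt_unitVec_right α β).const_smul c).deriv

theorem deriv_deriv_smul_unitVec_right (c α β : ℝ) :
    deriv (deriv fun b => c • unitVec α b) β = -(c • unitVec α β) := by
  have hderiv : deriv (fun b => c • unitVec α b) = fun b => c • unitVec α (b + π / 2) :=
    funext (deriv_smul_unitVec_right c α)
  have hshift : HasDerivAt (fun b => unitVec α (b + π / 2)) (-unitVec α β) β := by
    simpa [add_assoc, unitVec_add_pi_right] using
      (hasDerivAt_unitVec_right α (β + π / 2)).comp_add_const β (π / 2)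
  rw [hderiv, ← smul_neg]
  exact (hshift.const_smul c).deriv

theorem inv_smul_add_inv_smul_mem_span {E : Type*} [AddCommGroup E] [Module ℝ E]
    {r r' r'' : ℝ} (hr : 0 < r) (hode : r * r'' = 2 * r ^ 2 + 3 * r' ^ 2) (u v w : E) :
    (r' ^ 2 + r ^ 2)⁻¹ • ((r'' - r) • u + (2 * r') • v) + (r ^ 2)⁻¹ • -(r • u) ∈
      Submodule.span ℝ {r • v + r' • u, w} := by
  have : (r' ^ 2 + r ^ 2)⁻¹ • ((r'' - r) • u + (2 * r') • v) + (r ^ 2)⁻¹ • -(r • u) =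
      (2 * r' / (r * (r' ^ 2 + r ^ 2))) • (r • v + r' • u) := by
    have hS : 0 < r' ^ 2 + r ^ 2 := by positivity
    match_scalars <;> field_simp
    linear_combination hode
  rw [this]
  exact Submodule.smul_mem _ _ (Submodule.subset_span (Set.mem_insert _ _))

section rr

variable {d α₀ a : ℝ}

theorem cos_two_mul_sub_pos (h : |a - α₀| < π / 4) : 0 < cos (2 * (a - α₀)) := by
  rw [abs_lt] at h
  exact cos_pos_of_mem_Ioo ⟨by linarith, by linarith⟩

theorem rr_pos (hd : 0 < d) (h : |a - α₀| < π / 4) : 0 < rr d α₀ a :=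
  sqrt_pos.2 (div_pos hd (cos_two_mul_sub_pos h))

theorem rr_sq_mul_cos (hd : 0 < d) (h : |a - α₀| < π / 4) :
    rr d α₀ a ^ 2 * cos (2 * (a - α₀)) = d := by
  rw [rr, sq_sqrt (div_pos hd (cos_two_mul_sub_pos h)).le,
    div_mul_cancel₀ _ (cos_two_mul_sub_pos h).ne']

theorem hasDerivAt_two_mul_sub (α₀ a : ℝ) : HasDerivAt (fun a => 2 * (a - α₀)) 2 a := by
  simpa using ((hasDerivAt_id a).sub_const α₀).const_mul 2

theorem hasDerivAt_rr (hd : 0 < d) (h : |a - α₀| < π / 4) :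
    HasDerivAt (rr d α₀) (rr d α₀ a * tan (2 * (a - α₀))) a := by
  have hc := cos_two_mul_sub_pos h
  have hq := (hasDerivAt_const a d).div (hasDerivAt_two_mul_sub α₀ a).cos hc.ne'
  refine (hq.sqrt (div_pos hd hc).ne').congr_deriv ?_
  change _ / (2 * rr d α₀ a) = _
  have hr := (rr_pos hd h).ne'
  rw [tan_eq_sin_div_cos]
  field_simp
  linear_combination (-2 * sin (2 * (a - α₀))) * rr_sq_mul_cos hd h

theorem hasDerivAt_rr_mul_tan (hd : 0 < d) (h : |a - α₀| < π / 4) :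
    HasDerivAt (fun a => rr d α₀ a * tan (2 * (a - α₀)))
      (rr d α₀ a * (2 + 3 * tan (2 * (a - α₀)) ^ 2)) a := by
  have hc := cos_two_mul_sub_pos h
  refine ((hasDerivAt_rr hd h).mul
    ((hasDerivAt_tan hc.ne').comp a (hasDerivAt_two_mul_sub α₀ a))).congr_deriv ?_
  simp only [Function.comp_apply, tan_eq_sin_div_cos]
  field_simp
  linear_combination (-2 * rr d α₀ a) * sin_sq_add_cos_sq (2 * (a - α₀))

end rr

theorem stmt_10 (d α₀ : ℝ) (hd : 0 < d) (α β : ℝ) (hα : |α - α₀| < π / 4) :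
    ((deriv (rr d α₀) α) ^ 2 + (rr d α₀ α) ^ 2)⁻¹ •
        deriv (deriv (fun a => U d α₀ a β)) α
      + ((rr d α₀ α) ^ 2)⁻¹ • deriv (deriv (fun b => U d α₀ α b)) β
    ∈ Submodule.span ℝ
        ({deriv (fun a => U d α₀ a β) α, deriv (fun b => U d α₀ α b) β} :
          Set (EuclideanSpace ℝ (Fin 4))) := by
  have hnear : ∀ᶠ a in 𝓝 α, |a - α₀| < π / 4 :=
    (continuous_id.sub continuous_const).abs.continuousAt.eventually_lt continuousAt_const hα
  have hrr := hasDerivAt_rr hd hα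
  simp only [U_eq_smul_unitVec]
  rw [hrr.deriv, (hasDerivAt_smul_unitVec_left β hrr).deriv,
    deriv_smul_unitVec_right,
    deriv_deriv_smul_unitVec_left β (hnear.mono fun a ha => hasDerivAt_rr hd ha)
      (hasDerivAt_rr_mul_tan hd hα), deriv_deriv_smul_unitVec_right]
  exact inv_smul_add_inv_smul_mem_span (rr_pos hd hα) (by ring) _ _ _
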